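/- arXiv:1709.03670 — 7 statements merged into one kernel-verified Lean document; each statement's English description precedes it below -/
import Mathlib

section
/- (Fact 1) Let n, d, k, i, j be integers with 2 ≤ d ≤ n, 0 ≤ i ≤ k ≤ n, and 0 ≤ j ≤ n − k. Let A ∈ {0,1}^n be the vector whose first k coordinates are 0 and whose last n − k coordinates are 1, and let V_{i,j} ∈ {0,1}^n be obtained from A by flipping the first i of the first k coordinates (to 1) and the first j of the last n − k coordinates (to 0). For a vector V ∈ {0,1}^n and a d-element subset E of [n], let f_E(V) = 1 if all coordinates of V indexed by E are equal and f_E(V) = 0 otherwise. Then the number of d-element subsets E of [n] with f_E(A) ≠ f_E(V_{i,j}) equals Σ_{ℓ=1}^{d-1} C(i,ℓ)C(k−i, d−ℓ) + Σ_{ℓ=1}^{d-1} C(j,ℓ)C(n−k−j, d−ℓ) + Σ_{ℓ=1}^{d-1} C(i,ℓ)C(n−k−j, d−ℓ) + Σ_{ℓ=1}^{d-1} C(k−i,ℓ)C(j, d−ℓ). -/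
/-!
Label each point `x` by the pair `(A x, V x)`; for `A = baseVec n k` and `V = flipVec n k i j`
the four label classes are intervals of sizes `i`, `k - i`, `j` and `n - k - j`. Whether a
hyperedge is homogeneous for `A` or for `V` depends only on the set of labels it meets, and a
finite check shows that it is homogeneous for exactly one of them iff it meets exactly two
classes whose labels agree in one coordinate. There are four such pairs of classes, and the
`d`-sets meeting both classes of a pair, split by how many points lie in the first class,
are counted by the sum of `C(s, ℓ) C(t, d - ℓ)` over `1 ≤ ℓ ≤ d - 1`.
-/

/-- Homogeneity measurement of a labeling `V` on a hyperedge `E`: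
`1` iff all coordinates of `V` indexed by `E` are equal. -/
def fE {n : ℕ} (V : Fin n → Bool) (E : Finset (Fin n)) : Bool :=
  decide (∀ a ∈ E, ∀ b ∈ E, V a = V b)

/-- The labeling whose first `k` coordinates are `0` and last `n-k` coordinates are `1`. -/
def baseVec (n k : ℕ) : Fin n → Bool := fun x => decide (k ≤ (x : ℕ))

/-- The labeling obtained from `baseVec n k` by flipping the first `i` of the first `k`
coordinates (to `1`) and the first `j` of the last `n-k` coordinates (to `0`). -/
def flipVec (n k i j : ℕ) : Fin n → Bool := fun x => decide ((x : ℕ) < i ∨ k + j ≤ (x : ℕ))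

open Finset

section
variable {α : Type*} [DecidableEq α]

theorem union_inter_eq_left_of_disjoint {S P Q : Finset α} (hP : P ⊆ S) (hQ : Disjoint Q S) :
    (P ∪ Q) ∩ S = P := by
  rw [union_inter_distrib_right, inter_eq_left.2 hP, disjoint_iff_inter_eq_empty.1 hQ,
    union_empty]

theorem card_inter_add_card_inter_of_subset_union {S T E : Finset α} (hST : Disjoint S T)
    (hE : E ⊆ S ∪ T) : #(E ∩ S) + #(E ∩ T) = #E := by
  rw [← card_union_of_disjoint (hST.mono inter_subset_right inter_subset_right),
    ← inter_union_distrib_left, inter_eq_left.2 hE]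

theorem card_powersetCard_union_filter_card_inter_eq {S T : Finset α} (hST : Disjoint S T)
    {d ℓ : ℕ} (hℓ : ℓ ≤ d) :
    #{E ∈ (S ∪ T).powersetCard d | #(E ∩ S) = ℓ} = (#S).choose ℓ * (#T).choose (d - ℓ) := by
  rw [← card_powersetCard, ← card_powersetCard, ← card_product]
  refine card_nbij' (fun E => (E ∩ S, E ∩ T)) (fun P => P.1 ∪ P.2) ?_ ?_ ?_ ?_
  · intro E hE
    simp only [mem_coe, mem_filter, mem_powersetCard, mem_product] at hE ⊢
    obtain ⟨⟨hES, rfl⟩, hEℓ⟩ := hE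
    have := card_inter_add_card_inter_of_subset_union hST hES
    exact ⟨⟨inter_subset_right, hEℓ⟩, inter_subset_right, by omega⟩
  · rintro ⟨P, Q⟩ hPQ
    simp only [mem_coe, mem_filter, mem_powersetCard, mem_product] at hPQ ⊢
    obtain ⟨⟨hP, rfl⟩, hQ, hQd⟩ := hPQ
    refine ⟨⟨union_subset_union hP hQ, ?_⟩,
      by rw [union_inter_eq_left_of_disjoint hP (hST.symm.mono_left hQ)]⟩
    rw [card_union_of_disjoint (hST.mono hP hQ)]
    omega
  · intro E hE
    simp only [mem_coe, mem_filter, mem_powersetCard] at hE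
    exact (inter_union_distrib_left E S T).symm.trans (inter_eq_left.2 hE.1.1)
  · rintro ⟨P, Q⟩ hPQ
    simp only [mem_coe, mem_powersetCard, mem_product] at hPQ
    obtain ⟨⟨hP, -⟩, hQ, -⟩ := hPQ
    dsimp only
    rw [union_inter_eq_left_of_disjoint hP (hST.symm.mono_left hQ), union_comm,
      union_inter_eq_left_of_disjoint hQ (hST.mono_left hP)]

theorem card_powersetCard_union_filter_nonempty_inter {S T : Finset α} (hST : Disjoint S T)
    (d : ℕ) :
    #{E ∈ (S ∪ T).powersetCard d | (E ∩ S).Nonempty ∧ (E ∩ T).Nonempty} =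
      ∑ ℓ ∈ Icc 1 (d - 1), (#S).choose ℓ * (#T).choose (d - ℓ) := by
  have hmeets : ∀ E ∈ (S ∪ T).powersetCard d,
      (E ∩ S).Nonempty ∧ (E ∩ T).Nonempty ↔ #(E ∩ S) ∈ Icc 1 (d - 1) := by
    intro E hE
    rw [mem_powersetCard] at hE
    have := card_inter_add_card_inter_of_subset_union hST hE.1
    rw [← card_pos, ← card_pos, mem_Icc]
    omega
  rw [filter_congr hmeets, card_eq_sum_card_fiberwise (f := fun E => #(E ∩ S))
    (s := {E ∈ (S ∪ T).powersetCard d | #(E ∩ S) ∈ Icc 1 (d - 1)})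
    fun E hE => (mem_filter.1 hE).2]
  refine sum_congr rfl fun ℓ hℓ => ?_
  have hℓd : ℓ ≤ d := (mem_Icc.1 hℓ).2.trans (Nat.sub_le d 1)
  rw [filter_filter, ← card_powersetCard_union_filter_card_inter_eq hST hℓd]
  congr 1
  exact filter_congr fun E _ => ⟨And.right, fun h => ⟨h ▸ hℓ, h⟩⟩

theorem card_powersetCard_filter_image_eq_pair [Fintype α] {β : Type*} [DecidableEq β]
    (c : α → β) {p q : β} (hpq : p ≠ q) (d : ℕ) :
    #{E ∈ univ.powersetCard d | E.image c = {p, q}} =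
      ∑ ℓ ∈ Icc 1 (d - 1), (#{x | c x = p}).choose ℓ * (#{x | c x = q}).choose (d - ℓ) := by
  have hdisj : Disjoint (α := Finset α) {x | c x = p} {x | c x = q} :=
    disjoint_filter.2 fun x _ hp hq => hpq (hp.symm.trans hq)
  rw [← card_powersetCard_union_filter_nonempty_inter hdisj]
  congr 1
  ext E
  rw [mem_filter, mem_filter, mem_powersetCard_univ, mem_powersetCard, Subset.antisymm_iff,
    image_subset_iff, insert_subset_iff, singleton_subset_iff, ← filter_or]
  simp only [mem_insert, mem_singleton, mem_image, subset_iff, mem_filter, mem_univ, true_and,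
    Finset.Nonempty, mem_inter]
  tauto

end

theorem card_filter_fin_eq_sub {n a b : ℕ} (hb : b ≤ n) {P : Fin n → Prop} [DecidablePred P]
    (hP : ∀ x : Fin n, P x ↔ a ≤ (x : ℕ) ∧ (x : ℕ) < b) : #{x | P x} = b - a := by
  rw [← Nat.card_Ico, ← card_map Fin.valEmbedding]
  congr 1
  ext m
  simp only [mem_map, mem_filter, mem_univ, true_and, hP, Fin.valEmbedding_apply, mem_Ico]
  exact ⟨by rintro ⟨x, hx, rfl⟩; exact hx, fun hm => ⟨⟨m, by omega⟩, hm, rfl⟩⟩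

def distinctiveTypes : Finset (Finset (Bool × Bool)) :=
  {{(false, true), (false, false)}, {(true, false), (true, true)},
    {(false, true), (true, true)}, {(false, false), (true, false)}}

theorem mem_distinctiveTypes_iff (τ : Finset (Bool × Bool)) :
    τ ∈ distinctiveTypes ↔
      ¬((∀ p ∈ τ, ∀ q ∈ τ, p.1 = q.1) ↔ ∀ p ∈ τ, ∀ q ∈ τ, p.2 = q.2) := by
  revert τ
  decide

section
variable {n : ℕ}

theorem fE_comp_eq_true_iff {β : Type*} [DecidableEq β] (g : β → Bool) (c : Fin n → β)
    (E : Finset (Fin n)) :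
    fE (g ∘ c) E = true ↔ ∀ p ∈ E.image c, ∀ q ∈ E.image c, g p = g q := by
  simp [fE]

theorem fE_ne_fE_iff (A V : Fin n → Bool) (E : Finset (Fin n)) :
    fE A E ≠ fE V E ↔ E.image (fun x => (A x, V x)) ∈ distinctiveTypes := by
  let c : Fin n → Bool × Bool := fun x => (A x, V x)
  rw [ne_eq, Bool.eq_iff_iff, mem_distinctiveTypes_iff]
  exact not_congr
    (iff_congr (fE_comp_eq_true_iff Prod.fst c E) (fE_comp_eq_true_iff Prod.snd c E))

theorem card_filter_fE_ne (A V : Fin n → Bool) (d : ℕ) :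
    #{E ∈ univ.powersetCard d | fE A E ≠ fE V E} =
      ∑ τ ∈ distinctiveTypes,
        #{E ∈ univ.powersetCard d | E.image (fun x => (A x, V x)) = τ} := by
  simp_rw [fE_ne_fE_iff]
  rw [card_eq_sum_card_fiberwise (f := fun E => E.image fun x => (A x, V x))
    (s := {E ∈ univ.powersetCard d | E.image (fun x => (A x, V x)) ∈ distinctiveTypes})
    fun E hE => (mem_filter.1 hE).2]
  refine sum_congr rfl fun τ hτ => ?_
  rw [filter_filter]
  exact congrArg card (filter_congr fun E _ => ⟨And.right, fun h => ⟨h ▸ hτ, h⟩⟩)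

end

theorem fact1_general (n d k i j : ℕ)
    (hik : i ≤ k) (hkn : k ≤ n) (hj : j ≤ n - k) :
    ((((Finset.univ : Finset (Fin n)).powersetCard d).filter
        (fun E => fE (baseVec n k) E ≠ fE (flipVec n k i j) E)).card)
      = (∑ ℓ ∈ Finset.Icc 1 (d - 1), i.choose ℓ * (k - i).choose (d - ℓ))
      + (∑ ℓ ∈ Finset.Icc 1 (d - 1), j.choose ℓ * (n - k - j).choose (d - ℓ))
      + (∑ ℓ ∈ Finset.Icc 1 (d - 1), i.choose ℓ * (n - k - j).choose (d - ℓ))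
      + (∑ ℓ ∈ Finset.Icc 1 (d - 1), (k - i).choose ℓ * j.choose (d - ℓ)) := by
  let c : Fin n → Bool × Bool := fun x => (baseVec n k x, flipVec n k i j x)
  have h01 : #{x | c x = (false, true)} = i - 0 :=
    card_filter_fin_eq_sub (by omega) fun x => by simp [c, baseVec, flipVec]; omega
  have h00 : #{x | c x = (false, false)} = k - i :=
    card_filter_fin_eq_sub hkn fun x => by simp [c, baseVec, flipVec]; omega
  have h10 : #{x | c x = (true, false)} = k + j - k :=
    card_filter_fin_eq_sub (by omega) fun x => by simp [c, baseVec, flipVec]; omega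
  have h11 : #{x | c x = (true, true)} = n - (k + j) :=
    card_filter_fin_eq_sub le_rfl fun x => by simp [c, baseVec, flipVec]; omega
  rw [card_filter_fE_ne, distinctiveTypes, sum_insert (by decide), sum_insert (by decide),
    sum_insert (by decide), sum_singleton]
  simp (disch := decide) only [card_powersetCard_filter_image_eq_pair]
  rw [h01, h00, h10, h11, Nat.sub_zero, Nat.add_sub_cancel_left, Nat.sub_sub]
  ring

/-- **Fact 1.** The number of distinctive hyperedges between `A = baseVec n k` and
`V_{i,j} = flipVec n k i j` under the homogeneity measurement equals
`Σ_{ℓ=1}^{d-1} C(i,ℓ)C(k-i,d-ℓ) + Σ_{ℓ=1}^{d-1} C(j,ℓ)C(n-k-j,d-ℓ)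
 + Σ_{ℓ=1}^{d-1} C(i,ℓ)C(n-k-j,d-ℓ) + Σ_{ℓ=1}^{d-1} C(k-i,ℓ)C(j,d-ℓ)`. -/
theorem fact1 (n d k i j : ℕ) (hd : 2 ≤ d) (hdn : d ≤ n)
    (hik : i ≤ k) (hkn : k ≤ n) (hj : j ≤ n - k) :
    ((((Finset.univ : Finset (Fin n)).powersetCard d).filter
        (fun E => fE (baseVec n k) E ≠ fE (flipVec n k i j) E)).card)
      = (∑ ℓ ∈ Finset.Icc 1 (d - 1), i.choose ℓ * (k - i).choose (d - ℓ))
      + (∑ ℓ ∈ Finset.Icc 1 (d - 1), j.choose ℓ * (n - k - j).choose (d - ℓ))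
      + (∑ ℓ ∈ Finset.Icc 1 (d - 1), i.choose ℓ * (n - k - j).choose (d - ℓ))
      + (∑ ℓ ∈ Finset.Icc 1 (d - 1), (k - i).choose ℓ * j.choose (d - ℓ)) :=
  fact1_general n d k i j hik hkn hj
end

section
/- (Lemma 1) Fix an integer d ≥ 2 and δ ∈ (0, 1/2). Then for all sufficiently large n the following holds: for all integers k, i, j with 0 ≤ k ≤ n/2, 0 ≤ i ≤ k, 0 ≤ j ≤ n − k, i < δ·n and j < δ·n, the quantity |F_{i,j}| := Σ_{ℓ=1}^{d-1} C(i,ℓ)C(k−i, d−ℓ) + Σ_{ℓ=1}^{d-1} C(j,ℓ)C(n−k−j, d−ℓ) + Σ_{ℓ=1}^{d-1} C(i,ℓ)C(n−k−j, d−ℓ) + Σ_{ℓ=1}^{d-1} C(k−i,ℓ)C(j, d−ℓ) satisfies |F_{i,j}| ≥ (i + j) · ((1 − 2δ)^{d-1} / 2^{d-2}) · C(n−1, d−1). -/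
/-!
Put `a = k - i`, `b = n - k - j`, `W = (1/2 - δ) n`, `D = δ n`. With `S = crossChoose d` the four
sums regroup as `S(i,a) + S(i,b) + S(j,a) + S(j,b)`, so it suffices to show
`S(m,a) + S(m,b) ≥ 2 m W^(d-1) / (d-1)!` for `m ∈ {i, j}`, knowing `b > W` and
`a + b + m > 2W + D`. Keep the terms `m C(a,r) + m C(b,r)`, `r = d - 1`, bound `r! C(x,r)` below by
`(x - r + 1)^r` and use convexity of `x ↦ x^r`. If `m ≤ D/2`, the slack `D - m` absorbs the
shift by `r - 1`; otherwise the convexity bound falls short by `O(m W^(r-1))`, and the term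
`C(m,2) C(b,d-2)`, of order `m · D · W^(d-2)`, pays for it. Finally
`C(n-1,d-1) ≤ n^(d-1) / (d-1)!`.
-/

open Filter Finset
open scoped Nat

/-- The number of `d`-subsets of `X ⊔ Y`, `#X = x`, `#Y = y`, meeting both `X` and `Y`. -/
def crossChoose (d x y : ℕ) : ℕ := ∑ ℓ ∈ Icc 1 (d - 1), x.choose ℓ * y.choose (d - ℓ)

theorem crossChoose_comm (d x y : ℕ) : crossChoose d x y = crossChoose d y x := by
  refine sum_nbij' (fun ℓ => d - ℓ) (fun ℓ => d - ℓ) ?_ ?_ ?_ ?_ ?_ <;> intro ℓ hℓ <;>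
    simp only [mem_Icc] at hℓ ⊢
  any_goals omega
  rw [Nat.sub_sub_self (by omega), mul_comm]

theorem mul_choose_le_crossChoose {d : ℕ} (hd : 2 ≤ d) (x y : ℕ) :
    x * y.choose (d - 1) ≤ crossChoose d x y := by
  simpa [crossChoose] using single_le_sum (f := fun ℓ => x.choose ℓ * y.choose (d - ℓ))
    (fun _ _ => Nat.zero_le _) (mem_Icc.2 ⟨le_rfl, by omega⟩ : 1 ∈ Icc 1 (d - 1))

theorem mul_choose_add_choose_two_mul_le_crossChoose {d : ℕ} (hd : 3 ≤ d) (x y : ℕ) :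
    x * y.choose (d - 1) + x.choose 2 * y.choose (d - 2) ≤ crossChoose d x y := by
  have hsub : ({1, 2} : Finset ℕ) ⊆ Icc 1 (d - 1) := by
    intro ℓ hℓ
    simp only [mem_insert, mem_singleton] at hℓ
    simp only [mem_Icc]
    omega
  simpa [crossChoose, sum_pair] using
    sum_le_sum_of_subset (f := fun ℓ => x.choose ℓ * y.choose (d - ℓ)) hsub

theorem sub_le_cast_tsub {R : Type*} [Ring R] [PartialOrder R] [IsOrderedRing R] (m n : ℕ) :
    (m : R) - n ≤ ((m - n : ℕ) : R) := by
  have h := Nat.mono_cast (α := R) (le_tsub_add (b := m) (a := n))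
  rw [Nat.cast_add] at h
  exact sub_le_iff_le_add.2 h

theorem pow_le_factorial_mul_choose {a r : ℕ} {c : ℝ} (hc : 0 ≤ c)
    (h : c ≤ ((a + 1 - r : ℕ) : ℝ)) : c ^ r ≤ r ! * a.choose r := by
  have := Nat.pow_le_choose (α := ℝ) r a
  rw [div_le_iff₀' (by positivity)] at this
  exact (pow_le_pow_left₀ hc h r).trans (by exact_mod_cast this)

theorem pow_mul_choose_sub_one_le {c : ℝ} (hc : 0 ≤ c) (N r : ℕ) :
    c ^ r * (N - 1).choose r ≤ (c * N) ^ r / r ! := by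
  have hN : ((N - 1 : ℕ) : ℝ) ^ r ≤ (N : ℝ) ^ r :=
    pow_le_pow_left₀ (Nat.cast_nonneg _) (by exact_mod_cast Nat.sub_le N 1) r
  calc c ^ r * (N - 1).choose r ≤ c ^ r * (((N - 1 : ℕ) : ℝ) ^ r / r !) :=
        mul_le_mul_of_nonneg_left (Nat.choose_le_pow_div r (N - 1)) (by positivity)
    _ ≤ c ^ r * ((N : ℝ) ^ r / r !) := by gcongr
    _ = (c * N) ^ r / r ! := by rw [mul_pow, mul_div_assoc]

theorem two_mul_pow_le_pow_add_pow {W u v : ℝ} (hW : 0 ≤ W) (hu : 0 ≤ u) (hv : 0 ≤ v)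
    (h : 2 * W ≤ u + v) (r : ℕ) : 2 * W ^ r ≤ u ^ r + v ^ r := by
  cases r with
  | zero => norm_num
  | succ r =>
    have hpow : (2 * W) ^ (r + 1) ≤ 2 ^ r * (u ^ (r + 1) + v ^ (r + 1)) :=
      (pow_le_pow_left₀ (by positivity) h _).trans (add_pow_le hu hv _)
    rw [mul_pow, pow_succ', mul_assoc, mul_left_comm] at hpow
    exact le_of_mul_le_mul_left hpow (by positivity)

theorem two_mul_mul_sq_mul_pow_le {r : ℕ} {W D : ℝ} (hW : 2 * (r + 1) ≤ W)
    (hD : (r + 1) * 2 ^ (r + 4) ≤ D) {m b : ℕ} (hm : D / 2 < m) (hb : W < b) :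
    2 * m * (r + 1) ^ 2 * W ^ r ≤ (r + 1)! * (m.choose 2 * b.choose r) := by
  have h16 : (r + 1) * 16 * 2 ^ r ≤ D := by
    rw [pow_add] at hD; linarith
  have hchoose_b : (W / 2) ^ r ≤ r ! * b.choose r := by
    refine pow_le_factorial_mul_choose (by linarith) ((?_ : W / 2 ≤ (b + 1 : ℕ) - r).trans
      (sub_le_cast_tsub _ _))
    push_cast; linarith
  have hchoose_m : m * (D / 8) ≤ m.choose 2 := by
    rw [Nat.cast_choose_two]
    have : D / 4 ≤ m - 1 := by nlinarith [one_le_pow₀ (M₀ := ℝ) (n := r) one_le_two]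
    nlinarith
  calc 2 * m * (r + 1) ^ 2 * W ^ r = (r + 1) * (m * (2 * (r + 1) * 2 ^ r)) * (W / 2) ^ r := by
        rw [div_pow]; field_simp
    _ ≤ (r + 1) * (m * (D / 8)) * (r ! * b.choose r) := by
        have hD0 : 0 ≤ D := le_trans (by positivity) h16
        gcongr
        · exact pow_nonneg (by linarith) r
        · linarith
    _ ≤ (r + 1) * m.choose 2 * (r ! * b.choose r) := by gcongr
    _ = (r + 1)! * (m.choose 2 * b.choose r) := by push_cast [Nat.factorial_succ]; ring

theorem two_mul_pow_le_factorial_mul {r : ℕ} {W D : ℝ} (hW : 2 * (r + 1) ≤ W)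
    (hD : (r + 1) * 2 ^ (r + 4) ≤ D) {a b m : ℕ} (hm : m < D) (hb : W < b)
    (habm : 2 * W + D < a + b + m) :
    2 * m * W ^ (r + 1) ≤ (r + 1)! *
      (m * a.choose (r + 1) + m * b.choose (r + 1) + m.choose 2 * b.choose r) := by
  set u : ℝ := ((a - r : ℕ) : ℝ)
  set v : ℝ := ((b - r : ℕ) : ℝ)
  have hu : u ^ (r + 1) ≤ (r + 1)! * a.choose (r + 1) :=
    pow_le_factorial_mul_choose (Nat.cast_nonneg _) (by rw [Nat.add_sub_add_right])
  have hv : v ^ (r + 1) ≤ (r + 1)! * b.choose (r + 1) :=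
    pow_le_factorial_mul_choose (Nat.cast_nonneg _) (by rw [Nat.add_sub_add_right])
  have huv : (a : ℝ) + b - 2 * r ≤ u + v := by
    linarith [sub_le_cast_tsub (R := ℝ) a r, sub_le_cast_tsub (R := ℝ) b r]
  have hm0 : (0 : ℝ) ≤ m := m.cast_nonneg
  have hrest : 0 ≤ ((r + 1)! : ℝ) * (m.choose 2 * b.choose r) := by positivity
  rcases le_or_gt (m : ℝ) (D / 2) with hsmall | hlarge
  · have h16 : (r + 1) * 16 ≤ D := by
      rw [pow_add] at hD; nlinarith [one_le_pow₀ (M₀ := ℝ) (n := r) one_le_two]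
    have hpow : 2 * W ^ (r + 1) ≤ u ^ (r + 1) + v ^ (r + 1) :=
      two_mul_pow_le_pow_add_pow (by linarith) (Nat.cast_nonneg _) (Nat.cast_nonneg _)
        (by linarith) _
    linarith [mul_le_mul_of_nonneg_left (hpow.trans (add_le_add hu hv)) hm0]
  · have hpow : 2 * (W - (r + 1)) ^ (r + 1) ≤ u ^ (r + 1) + v ^ (r + 1) :=
      two_mul_pow_le_pow_add_pow (by linarith) (Nat.cast_nonneg _) (Nat.cast_nonneg _)
        (by linarith) _
    have hbernoulli : W ^ (r + 1) - (r + 1) ^ 2 * W ^ r ≤ (W - (r + 1)) ^ (r + 1) := by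
      have := pow_add_mul_le_add_pow (a := W) (b := -(r + 1)) (by linarith) (by linarith) (r + 1)
      push_cast at this
      rw [← sub_eq_add_neg] at this
      linarith
    have hboost := two_mul_mul_sq_mul_pow_le hW hD hlarge hb
    have hsum : 2 * W ^ (r + 1) - 2 * ((r + 1) ^ 2 * W ^ r) ≤
        (r + 1)! * a.choose (r + 1) + (r + 1)! * b.choose (r + 1) := by linarith
    linarith [mul_le_mul_of_nonneg_left hsum hm0]

theorem two_mul_pow_div_factorial_le_crossChoose_add {d : ℕ} (hd : 2 ≤ d) {W D : ℝ}
    (hW : 2 * d ≤ W) (hD : d * 2 ^ (d + 2) ≤ D) {a b m : ℕ} (hm : m < D) (hb : W < b)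
    (habm : 2 * W + D < a + b + m) :
    2 * m * W ^ (d - 1) / (d - 1)! ≤ crossChoose d m a + crossChoose d m b := by
  obtain ⟨r, rfl⟩ : ∃ r, d = r + 2 := ⟨d - 2, by omega⟩
  rcases r with _ | r
  · have hab : 2 * W ≤ a + b := by linarith
    simp only [zero_add, Nat.add_one_sub_one, pow_one, Nat.factorial_one, Nat.cast_one, div_one,
      crossChoose, Icc_self, sum_singleton, Nat.choose_one_right, Nat.cast_mul]
    nlinarith [mul_le_mul_of_nonneg_left hab m.cast_nonneg]
  · rw [show r + 1 + 2 - 1 = r + 1 + 1 by omega, div_le_iff₀' (by positivity)]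
    push_cast at hW hD
    have hfac := two_mul_pow_le_factorial_mul (r := r + 1) (by push_cast; linarith)
      (le_trans (by push_cast; gcongr; norm_num) hD) hm hb habm
    have hca := mul_choose_le_crossChoose (d := r + 1 + 2) (by omega) m a
    have hcb := mul_choose_add_choose_two_mul_le_crossChoose (d := r + 1 + 2) (by omega) m b
    simp only [show r + 1 + 2 - 1 = r + 1 + 1 by omega, show r + 1 + 2 - 2 = r + 1 by omega]
      at hca hcb
    refine hfac.trans (mul_le_mul_of_nonneg_left ?_ (by positivity))
    exact_mod_cast by omega

/-- **Lemma 1.** For fixed `d ≥ 2` and `δ ∈ (0,1/2)`, for all sufficiently large `n`: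
whenever `0 ≤ k ≤ n/2`, `i ≤ k`, `j ≤ n-k`, `i < δn` and `j < δn`, the number
`|F_{i,j}|` of distinctive hyperedges satisfies
`|F_{i,j}| ≥ (i+j)·((1-2δ)^{d-1}/2^{d-2})·C(n-1,d-1)`. -/
theorem lemma1 (d : ℕ) (hd : 2 ≤ d) (δ : ℝ) (hδ : δ ∈ Set.Ioo (0 : ℝ) (1/2)) :
    ∀ᶠ n : ℕ in atTop, ∀ k i j : ℕ,
      2 * k ≤ n → i ≤ k → j ≤ n - k → (i : ℝ) < δ * n → (j : ℝ) < δ * n →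
      ((i : ℝ) + (j : ℝ)) * ((1 - 2 * δ) ^ (d - 1) / 2 ^ (d - 2))
          * ((n - 1).choose (d - 1) : ℝ)
        ≤ (((∑ ℓ ∈ Finset.Icc 1 (d - 1), i.choose ℓ * (k - i).choose (d - ℓ))
          + (∑ ℓ ∈ Finset.Icc 1 (d - 1), j.choose ℓ * (n - k - j).choose (d - ℓ))
          + (∑ ℓ ∈ Finset.Icc 1 (d - 1), i.choose ℓ * (n - k - j).choose (d - ℓ))
          + (∑ ℓ ∈ Finset.Icc 1 (d - 1), (k - i).choose ℓ * j.choose (d - ℓ)) : ℕ) : ℝ) := by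
  obtain ⟨hδ0, hδ1⟩ := hδ
  have hlinear {c : ℝ} (hc : 0 < c) (C : ℝ) : ∀ᶠ n : ℕ in atTop, C ≤ c * n :=
    (tendsto_natCast_atTop_atTop.const_mul_atTop hc).eventually_ge_atTop C
  filter_upwards [hlinear (by linarith : 0 < 1 / 2 - δ) (2 * d), hlinear hδ0 (d * 2 ^ (d + 2))]
    with n hW hD k i j h2k hik hjk hi hj
  have ha : ((k - i : ℕ) : ℝ) = k - i := Nat.cast_sub hik
  have hb : ((n - k - j : ℕ) : ℝ) = n - k - j := by
    rw [Nat.cast_sub hjk, Nat.cast_sub (by omega)]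
  have h2k' : (2 * k : ℝ) ≤ n := by exact_mod_cast h2k
  have hsum (m : ℕ) (hm : (m : ℝ) < δ * n)
      (hmn : (n : ℝ) - δ * n < k - i + (n - k - j) + m) :=
    two_mul_pow_div_factorial_le_crossChoose_add hd hW hD (a := k - i) hm
      (by rw [hb]; linarith) (by rw [ha, hb]; linarith)
  have hsi := hsum i hi (by linarith)
  have hsj := hsum j hj (by linarith)
  have hbin := pow_mul_choose_sub_one_le (by linarith : 0 ≤ 1 / 2 - δ) n (d - 1)
  have hcoef : (1 - 2 * δ) ^ (d - 1) / 2 ^ (d - 2) = 2 * (1 / 2 - δ) ^ (d - 1) := by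
    obtain ⟨r, rfl⟩ : ∃ r, d = r + 2 := ⟨d - 2, by omega⟩
    rw [show r + 2 - 1 = r + 1 by omega, Nat.add_sub_cancel,
      show 1 - 2 * δ = 2 * (1 / 2 - δ) by ring, mul_pow, div_eq_iff (by positivity)]
    ring
  change _ ≤ ((crossChoose d i (k - i) + crossChoose d j (n - k - j) +
    crossChoose d i (n - k - j) + crossChoose d (k - i) j : ℕ) : ℝ)
  rw [crossChoose_comm d (k - i), hcoef]
  push_cast
  rw [mul_div_assoc] at hsi hsj
  linarith [mul_le_mul_of_nonneg_left hbin (by positivity : (0 : ℝ) ≤ 2 * (i + j))]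
end

section
/- (Lemma 2) Let (d_n) and (p_n) be sequences with 2 ≤ d_n ≤ n, d_n = O(log n) and C(n, d_n)·p_n = O(n·log n). Draw a random d_n-uniform hypergraph on the vertex set [n] by including each d_n-element subset of [n] as a hyperedge independently with probability p_n. Let R_big ⊆ [n] be any (deterministic) subset with |R_big| = O(n / (log n)^7), and let R_res be the subset of R_big obtained by deleting every node of R_big that lies in some sampled hyperedge containing another node of R_big. Then for every ε > 0, Pr(|R_res| ≥ (1 − ε)·|R_big|) → 1 as n → ∞. -/
/-!
A node of `R` leaves the residual set only if some sampled hyperedge contains it together with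
another node of `R`. For fixed `v ≠ w` at most `C(n-2, d-2)` hyperedges contain both, so the
expected number of lost nodes is at most `|R|² C(n-2, d-2) p`, and Markov's inequality bounds the
probability of losing `ε|R|` of them by `|R| C(n-2, d-2) p / ε`. By
`C(n,d) C(d,2) = C(n,2) C(n-2,d-2)` this is
`O((n / log⁷ n) · log² n · n log n / n²) = O(1 / log⁴ n)`.
-/

open MeasureTheory Filter
open scoped ENNReal

/-- Potential hyperedges: `d`-element subsets of `[n]`. -/
abbrev Edge (n d : ℕ) := {E : Finset (Fin n) // E.card = d}

/-- Bernoulli measure on `Bool` with parameter `q` (clamped to `[0,1]`). -/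
noncomputable def bern (q : ℝ) : Measure Bool :=
  (PMF.bernoulli (min (Real.toNNReal q) 1) (min_le_right _ _)).toMeasure

instance (q : ℝ) : IsProbabilityMeasure (bern q) := by
  unfold bern; infer_instance

/-- Random `d`-uniform hypergraph on `[n]`: each `d`-element subset is a hyperedge
independently with probability `p`. -/
noncomputable def hyperMeasure (n d : ℕ) (p : ℝ) : Measure (Edge n d → Bool) :=
  Measure.pi fun _ : Edge n d => bern p

open scoped Classical in
/-- The residual set: nodes of `R` that do not lie in any sampled hyperedge containing
another node of `R`. -/
noncomputable def Rres {n d : ℕ} (R : Finset (Fin n)) (ω : Edge n d → Bool) :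
    Finset (Fin n) :=
  R.filter (fun v => ¬ ∃ E : Edge n d, ω E = true ∧ v ∈ E.1 ∧ ∃ w ∈ E.1, w ∈ R ∧ w ≠ v)

open Asymptotics Finset

instance (n d : ℕ) (p : ℝ) : IsProbabilityMeasure (hyperMeasure n d p) := by
  unfold hyperMeasure; infer_instance

lemma card_edges_containing_pair_le {α : Type*} [Fintype α] [DecidableEq α] {v w : α}
    (hvw : v ≠ w) (d : ℕ) :
    #{E : {s : Finset α // s.card = d} | v ∈ E.1 ∧ w ∈ E.1}
      ≤ (Fintype.card α - 2).choose (d - 2) := by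
  have hpair : ∀ s : Finset α, v ∈ s → w ∈ s → {v, w} ⊆ s := fun s hv hw =>
    insert_subset hv (singleton_subset_iff.2 hw)
  calc _ ≤ #((univ \ {v, w}).powersetCard (d - 2)) := by
        refine card_le_card_of_injOn (fun E => E.1 \ {v, w}) (fun E hE => ?_)
          (fun E hE F hF h => ?_)
        · simp only [coe_filter, mem_univ, true_and, Set.mem_ofPred_eq] at hE
          rw [mem_coe, mem_powersetCard, card_sdiff_of_subset (hpair _ hE.1 hE.2), E.2,
            card_pair hvw]
          exact ⟨sdiff_subset_sdiff (subset_univ _) le_rfl, rfl⟩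
        · simp only [coe_filter, mem_univ, true_and, Set.mem_ofPred_eq] at hE hF
          apply Subtype.ext
          rw [← sdiff_union_of_subset (hpair _ hE.1 hE.2),
            ← sdiff_union_of_subset (hpair _ hF.1 hF.2)]
          exact congrArg (· ∪ {v, w}) h
    _ = _ := by
        rw [card_powersetCard, card_sdiff_of_subset (subset_univ _), card_univ, card_pair hvw]

lemma bern_singleton_true_le (q : ℝ) : bern q {true} ≤ ENNReal.ofReal q := by
  rw [bern, PMF.toMeasure_apply_singleton _ _ (measurableSet_singleton _)]
  simp [PMF.bernoulli_apply, ENNReal.ofReal]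

section Residual

variable {n d : ℕ} {p : ℝ}

lemma hyperMeasure_edge_le (E : Edge n d) :
    hyperMeasure n d p {ω | ω E = true} ≤ ENNReal.ofReal p :=
  ((measurePreserving_eval (fun _ => bern p) E).measure_preimage
    (measurableSet_singleton true).nullMeasurableSet).trans_le (bern_singleton_true_le p)

lemma hyperMeasure_mem_sdiff_Rres_le (R : Finset (Fin n)) (v : Fin n) :
    hyperMeasure n d p {ω | v ∈ R \ Rres R ω}
      ≤ #R * (n - 2).choose (d - 2) * ENNReal.ofReal p := by
  set pairEdges : Fin n → Finset (Edge n d) := fun w => {E | v ∈ E.1 ∧ w ∈ E.1}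
  have hcover :
      {ω | v ∈ R \ Rres R ω} ⊆ ⋃ w ∈ R.erase v, ⋃ E ∈ pairEdges w, {ω | ω E = true} := by
    intro ω hω
    rw [Set.mem_ofPred_eq, Finset.mem_sdiff, Rres, mem_filter, not_and, not_not] at hω
    obtain ⟨E, hE, hvE, w, hwE, hwR, hwv⟩ := hω.2 hω.1
    simp only [Set.mem_iUnion]
    exact ⟨w, mem_erase.2 ⟨hwv, hwR⟩, E, by simp [pairEdges, hvE, hwE], hE⟩
  calc _ ≤ ∑ w ∈ R.erase v, ∑ E ∈ pairEdges w, hyperMeasure n d p {ω | ω E = true} :=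
        (measure_mono hcover).trans <| (measure_biUnion_finset_le _ _).trans <|
          sum_le_sum fun w _ => measure_biUnion_finset_le _ _
    _ ≤ ∑ w ∈ R.erase v, ((n - 2).choose (d - 2) * ENNReal.ofReal p : ℝ≥0∞) := by
        refine sum_le_sum fun w hw => (sum_le_sum fun E _ => hyperMeasure_edge_le E).trans ?_
        rw [sum_const, nsmul_eq_mul]
        gcongr
        have := card_edges_containing_pair_le (Ne.symm (mem_erase.1 hw).1) d
        rw [Fintype.card_fin] at this
        exact_mod_cast this
    _ ≤ _ := by
        rw [sum_const, nsmul_eq_mul, mul_assoc]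
        gcongr
        exact erase_subset v R

lemma lintegral_card_sdiff_Rres_le (R : Finset (Fin n)) :
    ∫⁻ ω, (#(R \ Rres R ω) : ℝ≥0∞) ∂hyperMeasure n d p
      ≤ #R * (#R * (n - 2).choose (d - 2) * ENNReal.ofReal p) := by
  have hcard : ∀ ω : Edge n d → Bool, (#(R \ Rres R ω) : ℝ≥0∞)
      = ∑ v ∈ R, {ω' | v ∈ R \ Rres R ω'}.indicator 1 ω := by
    intro ω
    simp only [Set.indicator_apply, Set.mem_ofPred_eq, Pi.one_apply]
    rw [sum_boole, filter_mem_eq_inter, inter_eq_right.2 sdiff_subset]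
  simp_rw [hcard]
  rw [lintegral_finsetSum _ fun v _ => measurable_one.indicator .of_discrete]
  calc _ = ∑ v ∈ R, hyperMeasure n d p {ω | v ∈ R \ Rres R ω} :=
        sum_congr rfl fun v _ => lintegral_indicator_one MeasurableSet.of_discrete
    _ ≤ ∑ v ∈ R, (#R * (n - 2).choose (d - 2) * ENNReal.ofReal p : ℝ≥0∞) :=
        sum_le_sum fun v _ => hyperMeasure_mem_sdiff_Rres_le R v
    _ = _ := by rw [sum_const, nsmul_eq_mul]

lemma hyperMeasure_card_Rres_lt_le {ε : ℝ} (hε : 0 < ε) (R : Finset (Fin n)) :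
    hyperMeasure n d p {ω | (#(Rres R ω) : ℝ) < (1 - ε) * #R}
      ≤ ENNReal.ofReal (#R * (n - 2).choose (d - 2) * p / ε) := by
  rcases R.eq_empty_or_nonempty with rfl | hR
  · simp [not_lt.2 (Nat.cast_nonneg _)]
  have hsub : {ω : Edge n d → Bool | (#(Rres R ω) : ℝ) < (1 - ε) * #R}
      ⊆ {ω | #R * ENNReal.ofReal ε ≤ #(R \ Rres R ω)} := by
    intro ω hω
    have hsdiff : (#(R \ Rres R ω) : ℝ) = #R - #(Rres R ω) := by
      have hres : Rres R ω ⊆ R := filter_subset _ _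
      rw [card_sdiff_of_subset hres, Nat.cast_sub (card_le_card hres)]
    rw [Set.mem_ofPred_eq, ← ENNReal.ofReal_natCast, ← ENNReal.ofReal_natCast,
      ← ENNReal.ofReal_mul (Nat.cast_nonneg _)]
    exact ENNReal.ofReal_le_ofReal (by rw [Set.mem_ofPred_eq] at hω; linarith)
  have hRpos : (#R : ℝ≥0∞) ≠ 0 := by simpa using hR.ne_empty
  calc _ ≤ (∫⁻ ω, (#(R \ Rres R ω) : ℝ≥0∞) ∂hyperMeasure n d p)
          / (#R * ENNReal.ofReal ε) :=
        (measure_mono hsub).trans <| meas_ge_le_lintegral_div (by fun_prop)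
          (mul_ne_zero hRpos (by simpa using hε)) (by finiteness)
    _ ≤ #R * (#R * (n - 2).choose (d - 2) * ENNReal.ofReal p) / (#R * ENNReal.ofReal ε) := by
        gcongr
        exact lintegral_card_sdiff_Rres_le R
    _ = _ := by
        rw [ENNReal.mul_div_mul_left _ _ hRpos (by finiteness), ENNReal.ofReal_div_of_pos hε,
          ENNReal.ofReal_mul (by positivity)]
        norm_cast

end Residual

lemma tendsto_mul_choose_sub_two_mul (d : ℕ → ℕ) (p r : ℕ → ℝ)
    (hd : ∀ᶠ n : ℕ in atTop, 2 ≤ d n)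
    (hdO : (fun n : ℕ => (d n : ℝ)) =O[atTop] fun n : ℕ => Real.log n)
    (hsamp : (fun n : ℕ => (n.choose (d n) : ℝ) * p n)
      =O[atTop] fun n : ℕ => (n : ℝ) * Real.log n)
    (hr : r =O[atTop] fun n : ℕ => (n : ℝ) / (Real.log n) ^ 7) :
    Tendsto (fun n : ℕ => r n * (n - 2).choose (d n - 2) * p n) atTop (nhds 0) := by
  have hchoose : (fun n : ℕ => r n * (d n).choose 2 * ((n.choose (d n) : ℝ) * p n)
        * ((n.choose 2 : ℕ) : ℝ)⁻¹)
      =ᶠ[atTop] fun n : ℕ => r n * (n - 2).choose (d n - 2) * p n := by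
    filter_upwards [hd, eventually_ge_atTop 2] with n hdn hn
    have hn2 : ((n.choose 2 : ℕ) : ℝ) ≠ 0 := by exact_mod_cast (Nat.choose_pos hn).ne'
    have hcast : ((n.choose (d n) * (d n).choose 2 : ℕ) : ℝ)
        = ((n.choose 2 * (n - 2).choose (d n - 2) : ℕ) : ℝ) :=
      congrArg _ (Nat.choose_mul hdn)
    push_cast at hcast
    field_simp
    linear_combination (r n * p n) * hcast
  have hd2 : (fun n : ℕ => ((d n).choose 2 : ℝ)) =O[atTop] fun n : ℕ => Real.log n ^ 2 :=
    (isBigO_of_le _ fun n => by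
      simpa using (Nat.cast_le (α := ℝ)).2 (Nat.choose_le_pow (d n) 2)).trans (hdO.pow 2)
  have hlog : Tendsto (fun n : ℕ => (n : ℝ) / Real.log n ^ 7 * Real.log n ^ 2 * (n * Real.log n)
      * ((n : ℝ) ^ 2)⁻¹) atTop (nhds 0) := by
    refine (tendsto_inv_atTop_zero.comp <| (tendsto_pow_atTop four_ne_zero).comp <|
      Real.tendsto_log_atTop.comp tendsto_natCast_atTop_atTop).congr' ?_
    filter_upwards [eventually_ge_atTop 2] with n hn
    have hlog : Real.log n ≠ 0 := (Real.log_pos (by exact_mod_cast hn)).ne'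
    have hn0 : (n : ℝ) ≠ 0 := by positivity
    simp only [Function.comp_apply]
    field_simp
  exact (((hr.mul hd2).mul hsamp).mul (isTheta_choose 2).inv.isBigO
    |>.trans_tendsto hlog).congr' hchoose

theorem lemma2_general (d : ℕ → ℕ) (p : ℕ → ℝ) (R : ∀ n : ℕ, Finset (Fin n))
    (hd : ∀ᶠ n : ℕ in atTop, 2 ≤ d n ∧ d n ≤ n)
    (hdO : (fun n : ℕ => (d n : ℝ)) =O[atTop] fun n : ℕ => Real.log n)
    (hsamp : (fun n : ℕ => (n.choose (d n) : ℝ) * p n)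
      =O[atTop] fun n : ℕ => (n : ℝ) * Real.log n)
    (hR : (fun n : ℕ => ((R n).card : ℝ)) =O[atTop] fun n : ℕ => (n : ℝ) / (Real.log n) ^ 7) :
    ∀ ε : ℝ, 0 < ε →
      Tendsto (fun n : ℕ => hyperMeasure n (d n) (p n)
          {ω | (1 - ε) * ((R n).card : ℝ) ≤ ((Rres (R n) ω).card : ℝ)})
        atTop (nhds 1) := by
  intro ε hε
  have hbound : Tendsto (fun n => ENNReal.ofReal (#(R n) * (n - 2).choose (d n - 2) * p n / ε))
      atTop (nhds 0) := by
    simpa using ENNReal.tendsto_ofReal <|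
      (tendsto_mul_choose_sub_two_mul d p _ (hd.mono fun _ h => h.1) hdO hsamp hR).div_const ε
  have hbad : Tendsto (fun n => hyperMeasure n (d n) (p n)
      {ω | (#(Rres (R n) ω) : ℝ) < (1 - ε) * #(R n)}) atTop (nhds 0) :=
    tendsto_of_tendsto_of_tendsto_of_le_of_le tendsto_const_nhds hbound (fun _ => zero_le)
      fun n => hyperMeasure_card_Rres_lt_le hε (R n)
  have hgood : ∀ n, hyperMeasure n (d n) (p n)
        {ω | (1 - ε) * ((R n).card : ℝ) ≤ ((Rres (R n) ω).card : ℝ)}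
      = 1 - hyperMeasure n (d n) (p n) {ω | (#(Rres (R n) ω) : ℝ) < (1 - ε) * #(R n)} :=
    fun n => by
    rw [← prob_compl_eq_one_sub MeasurableSet.of_discrete, Set.compl_ofPred]
    simp only [not_lt]
  simpa [hgood] using ENNReal.Tendsto.sub tendsto_const_nhds hbad (Or.inl ENNReal.one_ne_top)

/-- **Lemma 2.** If `dₙ = O(log n)`, `C(n,dₙ)·pₙ = O(n log n)` and
`|R_big| = O(n/(log n)^7)`, then with probability tending to `1`,
`|R_res| ≥ (1-ε)·|R_big|` for any fixed `ε > 0`. -/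
theorem lemma2 (d : ℕ → ℕ) (p : ℕ → ℝ) (R : ∀ n : ℕ, Finset (Fin n))
    (hd : ∀ᶠ n : ℕ in atTop, 2 ≤ d n ∧ d n ≤ n)
    (hp : ∀ n, p n ∈ Set.Icc (0 : ℝ) 1)
    (hdO : (fun n : ℕ => (d n : ℝ)) =O[atTop] fun n : ℕ => Real.log n)
    (hsamp : (fun n : ℕ => (n.choose (d n) : ℝ) * p n)
      =O[atTop] fun n : ℕ => (n : ℝ) * Real.log n)
    (hR : (fun n : ℕ => ((R n).card : ℝ)) =O[atTop] fun n : ℕ => (n : ℝ) / (Real.log n) ^ 7) :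
    ∀ ε : ℝ, 0 < ε →
      Tendsto (fun n : ℕ => hyperMeasure n (d n) (p n)
          {ω | (1 - ε) * ((R n).card : ℝ) ≤ ((Rres (R n) ω).card : ℝ)})
        atTop (nhds 1) :=
  lemma2_general d p R hd hdO hsamp hR
end

section
/- (Lemma 3) Let n, d be integers with 2 ≤ d ≤ n/2. Set α := (n − d + 1)/d and β := ⌈(n − d + 1)/(2d + 1)⌉ (so that β < n/2). Then for every integer k with 1 ≤ k ≤ n/2: if k < β, then Σ_{i odd, 1 ≤ i ≤ d} C(k,i)·C(n−k, d−i) ≥ (2k / (5α)) · C(n,d); and if β ≤ k ≤ n/2, then Σ_{i odd, 1 ≤ i ≤ d} C(k,i)·C(n−k, d−i) ≥ (1/5) · C(n,d). -/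
lemma star (i p q m : ℕ) (hi : 2 ≤ i) (h1 : q + i ≤ m + p) (h2 : p + i ≤ m + q) :
    (p+1)*(q+1)*((i+1)*(m+1)) ≤ 2*i*m*((i+1)*(m+1)) + 2*p*q*((p+1)*(q+1)) := by
  have hm : i ≤ m := by omega
  rcases Nat.eq_zero_or_pos p with hp | hp
  · have hq1 : q + 1 ≤ 2*i*m := by
      have : q + 1 ≤ m := by omega
      calc q + 1 ≤ m := this
        _ ≤ 2*i*m := Nat.le_mul_of_pos_left m (by omega)
    subst hp
    have := Nat.mul_le_mul_right ((i+1)*(m+1)) hq1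
    calc (0+1)*(q+1)*((i+1)*(m+1)) = (q+1)*((i+1)*(m+1)) := by ring
      _ ≤ (2*i*m)*((i+1)*(m+1)) := this
      _ ≤ _ := Nat.le_add_right _ _
  rcases Nat.eq_zero_or_pos q with hq | hq
  · have hq1 : p + 1 ≤ 2*i*m := by
      have : p + 1 ≤ m := by omega
      calc p + 1 ≤ m := this
        _ ≤ 2*i*m := Nat.le_mul_of_pos_left m (by omega)
    subst hq
    have := Nat.mul_le_mul_right ((i+1)*(m+1)) hq1
    calc (p+1)*(0+1)*((i+1)*(m+1)) = (p+1)*((i+1)*(m+1)) := by ring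
      _ ≤ (2*i*m)*((i+1)*(m+1)) := this
      _ ≤ _ := Nat.le_add_right _ _
  -- main case p,q ≥ 1
  set A := (p+1)*(q+1) with hA
  set B := (i+1)*(m+1) with hB
  set u := 2*i*m*B with hu
  set v := 2*p*q*A with hv
  have h3 : A ≤ 4*(p*q) := by rw [hA]; nlinarith
  have h4 : 4*B ≤ 9*(i*m) := by rw [hB]; nlinarith [Nat.mul_le_mul hi hm, Nat.mul_le_mul hm hm]
  have key : (A*B)^2 ≤ 4*u*v := by
    have hAB : A*(4*B) ≤ (4*(p*q))*(9*(i*m)) := Nat.mul_le_mul h3 h4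
    have hAB1 : 4*(A*B) ≤ 36*(i*m*(p*q)) := by
      calc 4*(A*B) = A*(4*B) := by ring
        _ ≤ (4*(p*q))*(9*(i*m)) := hAB
        _ = 36*(i*m*(p*q)) := by ring
    have hAB2 : A*B ≤ 9*(i*m*(p*q)) := by omega
    calc (A*B)^2 = (A*B)*(A*B) := sq (A*B) ▸ by ring
      _ ≤ (A*B)*(9*(i*m*(p*q))) := Nat.mul_le_mul_left _ hAB2
      _ ≤ (A*B)*(16*(i*m*(p*q))) := Nat.mul_le_mul_left _ (by omega)
      _ = 4*u*v := by rw [hu, hv]; ring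
  have h5 : 4*u*v ≤ (u+v)^2 := by nlinarith [two_mul_le_add_sq u v]
  have h6 : (A*B)^2 ≤ (u+v)^2 := le_trans key h5
  have h7 : A*B ≤ u+v := by
    exact (Nat.pow_le_pow_iff_left (by norm_num)).mp h6
  exact h7

lemma stepB (n d k i : ℕ) (hdn : 2*d ≤ n) (hk2 : 2*k ≤ n) (hi : 2 ≤ i) (hid : i < d) :
    k.choose i * (n-k).choose (d-i)
      ≤ 2*(k.choose (i-1) * (n-k).choose (d-i+1)) + 2*(k.choose (i+1) * (n-k).choose (d-i-1)) := by
  by_cases hik : i ≤ k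
  swap
  · rw [Nat.choose_eq_zero_of_lt (by omega)]; simp
  by_cases hq : d - i ≤ n - k
  swap
  · rw [Nat.choose_eq_zero_of_lt (by omega)]; simp
  set q := d - i with hqdef
  have hq1 : 1 ≤ q := by omega
  set p := k - i with hpdef
  set m := (n-k) - q with hmdef
  have h1 : q + i ≤ m + p := by omega
  have h2 : p + i ≤ m + q := by omega
  set X := k.choose i with hX
  set Y := (n-k).choose q with hY
  have e1 : X * i = k.choose (i-1) * (p+1) := by
    have h := Nat.choose_succ_right_eq k (i-1)
    have h' : i - 1 + 1 = i := by omega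
    rw [h'] at h
    rw [h]; congr 1; omega
  have e2 : (n-k).choose (q+1) * (q+1) = Y * m := by
    have h := Nat.choose_succ_right_eq (n-k) q
    rw [h]
  have e3 : k.choose (i+1) * (i+1) = X * p := by
    have h := Nat.choose_succ_right_eq k i
    rw [h]
  have e4 : Y * q = (n-k).choose (q-1) * (m+1) := by
    have h := Nat.choose_succ_right_eq (n-k) (q-1)
    have h' : q - 1 + 1 = q := by omega
    rw [h'] at h
    rw [h]; congr 1; omega
  have hstar := star i p q m hi h1 h2
  have hXY := Nat.mul_le_mul_left (X*Y) hstar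
  set M := (p+1)*(q+1)*((i+1)*(m+1)) with hM
  have key : (X*Y)*M ≤ (2*(k.choose (i-1) * (n-k).choose (q+1)) + 2*(k.choose (i+1) * (n-k).choose (q-1)))*M := by
    calc (X*Y)*M = (X*Y)*((p+1)*(q+1)*((i+1)*(m+1))) := by rw [hM]
      _ ≤ (X*Y)*(2*i*m*((i+1)*(m+1)) + 2*p*q*((p+1)*(q+1))) := hXY
      _ = 2*((X*i)*(Y*m))*((i+1)*(m+1)) + 2*((X*p)*(Y*q))*((p+1)*(q+1)) := by ring
      _ = 2*((k.choose (i-1) * (p+1))*((n-k).choose (q+1) * (q+1)))*((i+1)*(m+1))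
            + 2*((k.choose (i+1) * (i+1))*((n-k).choose (q-1) * (m+1)))*((p+1)*(q+1)) := by
          rw [e1, ← e2, ← e3, e4]
      _ = (2*(k.choose (i-1) * (n-k).choose (q+1)) + 2*(k.choose (i+1) * (n-k).choose (q-1)))*M := by
          rw [hM]; ring
  exact Nat.le_of_mul_le_mul_right key (by positivity)

lemma stepC (n d k : ℕ) (hd : 1 ≤ d) (hb : n + 1 ≤ k*(2*d+1) + d) :
    (n-k).choose d ≤ 2*(k.choose 1 * (n-k).choose (d-1)) := by
  have h := Nat.choose_succ_right_eq (n-k) (d-1)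
  have h' : d - 1 + 1 = d := by omega
  rw [h'] at h
  have hle : (n-k) - (d-1) ≤ 2*k*d := by
    have : k*(2*d+1) = 2*k*d + k := by ring
    omega
  have key : (n-k).choose d * d ≤ (2*(k.choose 1 * (n-k).choose (d-1)))*d := by
    calc (n-k).choose d * d = (n-k).choose (d-1) * ((n-k)-(d-1)) := h
      _ ≤ (n-k).choose (d-1) * (2*k*d) := Nat.mul_le_mul_left _ hle
      _ = (2*(k.choose 1 * (n-k).choose (d-1)))*d := by rw [Nat.choose_one_right]; ring
  exact Nat.le_of_mul_le_mul_right key (by omega)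

lemma stepD (n d k : ℕ) (hd : 2 ≤ d) (hk2 : 2*k ≤ n) :
    k.choose d * (n-k).choose (d-d) ≤ 2*(k.choose (d-1) * (n-k).choose (d-(d-1))) := by
  by_cases hkd : d ≤ k
  swap
  · rw [Nat.choose_eq_zero_of_lt (by omega)]; simp
  have h' : d - (d-1) = 1 := by omega
  have h'' : d - d = 0 := by omega
  rw [h', h'', Nat.choose_zero_right, Nat.choose_one_right, Nat.mul_one]
  have h := Nat.choose_succ_right_eq k (d-1)
  have h3 : d - 1 + 1 = d := by omega
  rw [h3] at h
  have hle : k - (d-1) ≤ 2*(n-k)*d := by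
    have h4 : k ≤ n - k := by omega
    have h5 : n - k ≤ 2*(n-k)*d := by
      calc n-k ≤ (n-k)*(2*d) := Nat.le_mul_of_pos_right _ (by omega)
        _ = 2*(n-k)*d := by ring
    omega
  have key : k.choose d * d ≤ (2*(k.choose (d-1) * (n-k)))*d := by
    calc k.choose d * d = k.choose (d-1) * (k-(d-1)) := h
      _ ≤ k.choose (d-1) * (2*(n-k)*d) := Nat.mul_le_mul_left _ hle
      _ = (2*(k.choose (d-1) * (n-k)))*d := by ring
  exact Nat.le_of_mul_le_mul_right key (by omega)


lemma case2 (n d k : ℕ) (hd : 2 ≤ d) (hdn : 2*d ≤ n) (hk2 : 2*k ≤ n)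
    (hb : n + 1 ≤ k*(2*d+1) + d) :
    n.choose d ≤ 5 * ∑ i ∈ (Finset.Icc 1 d).filter (fun i => Odd i), k.choose i * (n-k).choose (d-i) := by
  set a : ℕ → ℕ := fun i => k.choose i * (n-k).choose (d-i) with ha
  set T : Finset ℕ := (Finset.Icc 1 d).filter (fun i => Odd i) with hT
  set O : ℕ := ∑ i ∈ T, a i with hO
  -- Vandermonde
  have hnk : k + (n-k) = n := by omega
  have hvan : n.choose d = ∑ i ∈ Finset.range (d+1), a i := by
    have h := Nat.add_choose_eq k (n-k) d
    rw [hnk] at h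
    rw [h, Finset.Nat.sum_antidiagonal_eq_sum_range_succ_mk]
  -- split by parity
  set s : Finset ℕ := (Finset.range (d+1)).filter (fun i => ¬ Odd i) with hs
  have hsplit : ∑ i ∈ (Finset.range (d+1)).filter (fun i => Odd i), a i
      + ∑ i ∈ s, a i = ∑ i ∈ Finset.range (d+1), a i :=
    Finset.sum_filter_add_sum_filter_not _ _ _
  have hseteq : (Finset.range (d+1)).filter (fun i => Odd i) = T := by
    rw [hT]
    ext i
    simp only [Finset.mem_filter, Finset.mem_range, Finset.mem_Icc, Nat.odd_iff]
    omega
  rw [hseteq] at hsplit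
  -- pointwise bound on even terms
  have point : ∀ i ∈ s, a i ≤ 2 * (if 1 ≤ i then a (i-1) else 0)
      + 2 * (if i+1 ≤ d then a (i+1) else 0) := by
    intro i hi
    rw [hs] at hi
    simp only [Finset.mem_filter, Finset.mem_range, Nat.odd_iff] at hi
    obtain ⟨hilt, hipar⟩ := hi
    rcases Nat.eq_zero_or_pos i with rfl | hipos
    · simp only [Nat.lt_irrefl, if_neg (by omega : ¬ 1 ≤ 0), if_pos (by omega : 0+1 ≤ d)]
      have := stepC n d k (by omega) hb
      simpa [ha] using this
    · have hi2 : 2 ≤ i := by omega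
      rcases Nat.lt_or_ge i d with hid | hid
      · rw [if_pos (by omega), if_pos (by omega)]
        have := stepB n d k i hdn hk2 hi2 hid
        have e1 : d - (i-1) = d - i + 1 := by omega
        have e2 : d - (i+1) = d - i - 1 := by omega
        simpa [ha, e1, e2] using this
      · have hieq : i = d := by omega
        rw [hieq, if_pos (by omega : 1 ≤ d), if_neg (by omega : ¬ (d+1 ≤ d))]
        have := stepD n d k hd hk2
        simpa [ha] using this
  have hE : ∑ i ∈ s, a i ≤ 4 * O := by
    have h1 : ∑ i ∈ s, a i ≤ ∑ i ∈ s, (2 * (if 1 ≤ i then a (i-1) else 0)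
        + 2 * (if i+1 ≤ d then a (i+1) else 0)) := Finset.sum_le_sum point
    have hL : ∑ i ∈ s, (if 1 ≤ i then a (i-1) else 0) ≤ O := by
      rw [← Finset.sum_filter]
      have hinj : ∀ x ∈ s.filter (fun i => 1 ≤ i), ∀ y ∈ s.filter (fun i => 1 ≤ i),
          x - 1 = y - 1 → x = y := by
        intro x hx y hy hxy
        simp only [Finset.mem_filter, hs, Finset.mem_range, Nat.odd_iff] at hx hy
        omega
      have himg := Finset.sum_image (f := a) hinj
      calc ∑ i ∈ s.filter (fun i => 1 ≤ i), a (i - 1)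
          = ∑ j ∈ (s.filter (fun i => 1 ≤ i)).image (fun i => i - 1), a j := himg.symm
        _ ≤ O := by
            apply Finset.sum_le_sum_of_subset
            intro j hj
            simp only [Finset.mem_image, Finset.mem_filter, hs, hT, Finset.mem_range,
              Finset.mem_Icc, Nat.odd_iff] at hj ⊢
            omega
    have hR : ∑ i ∈ s, (if i+1 ≤ d then a (i+1) else 0) ≤ O := by
      rw [← Finset.sum_filter]
      have hinj : ∀ x ∈ s.filter (fun i => i+1 ≤ d), ∀ y ∈ s.filter (fun i => i+1 ≤ d),
          x + 1 = y + 1 → x = y := by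
        intro x hx y hy hxy
        omega
      have himg := Finset.sum_image (f := a) hinj
      calc ∑ i ∈ s.filter (fun i => i+1 ≤ d), a (i + 1)
          = ∑ j ∈ (s.filter (fun i => i+1 ≤ d)).image (fun i => i + 1), a j := himg.symm
        _ ≤ O := by
            apply Finset.sum_le_sum_of_subset
            intro j hj
            simp only [Finset.mem_image, Finset.mem_filter, hs, hT, Finset.mem_range,
              Finset.mem_Icc, Nat.odd_iff] at hj ⊢
            omega
    calc ∑ i ∈ s, a i ≤ _ := h1
      _ = 2 * (∑ i ∈ s, (if 1 ≤ i then a (i-1) else 0))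
          + 2 * (∑ i ∈ s, (if i+1 ≤ d then a (i+1) else 0)) := by
        rw [Finset.sum_add_distrib, Finset.mul_sum, Finset.mul_sum]
      _ ≤ 2 * O + 2 * O := by
        exact Nat.add_le_add (Nat.mul_le_mul_left 2 hL) (Nat.mul_le_mul_left 2 hR)
      _ = 4 * O := by ring
  omega

lemma descF (n d k : ℕ) (hd : 2 ≤ d) (hb : k*(2*d+1) + d ≤ n) :
    2 * n.choose (d-1) ≤ 5 * (n-k).choose (d-1) := by
  have hd0 : (0:ℝ) < d := by
    have : 0 < d := by omega
    exact_mod_cast this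
  set x : ℝ := 1/(2*(d:ℝ)) with hx
  have hx0 : 0 < x := by positivity
  have hx4 : x ≤ 1/4 := by
    rw [hx]
    rw [div_le_div_iff₀ (by positivity) (by norm_num)]
    have h2d : (2:ℝ) ≤ d := by exact_mod_cast hd
    linarith
  have hkd : k*(2*d+1) = 2*k*d + k := by ring
  have claim : ∀ r, r ≤ d-1 → (n.descFactorial r : ℝ) ≤ (1+x)^r * ((n-k).descFactorial r) := by
    intro r
    induction r with
    | zero => intro _; simp
    | succ r ih =>
      intro hr
      have ihr := ih (by omega)
      rw [Nat.descFactorial_succ, Nat.descFactorial_succ]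
      have hnat : 2*k*d + k + r + 2 ≤ n := by omega
      have c1 : ((n - r : ℕ):ℝ) = (n:ℝ) - r := by
        rw [Nat.cast_sub (by omega)]
      have c2 : ((n - k - r : ℕ):ℝ) = (n:ℝ) - k - r := by
        rw [Nat.cast_sub (by omega), Nat.cast_sub (by omega)]
      have hkd2 : (2*k*d + k + r + 2 : ℝ) ≤ (n:ℝ) := by exact_mod_cast hnat
      have key : (n:ℝ) - r ≤ (1+x)*((n:ℝ)-k-r) := by
        have h2 : (k:ℝ) ≤ ((n:ℝ)-k-r) * x := by
          rw [hx, mul_one_div, le_div_iff₀ (by positivity)]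
          nlinarith [hkd2]
        nlinarith [h2]
      push_cast [c1, c2]
      have hdF : (0:ℝ) ≤ (n.descFactorial r : ℝ) := by positivity
      have hdFk : (0:ℝ) ≤ ((n-k).descFactorial r : ℝ) := by positivity
      calc ((n:ℝ)-r) * (n.descFactorial r : ℝ)
          ≤ ((1+x)*((n:ℝ)-k-r)) * (n.descFactorial r : ℝ) :=
            mul_le_mul_of_nonneg_right key hdF
        _ ≤ ((1+x)*((n:ℝ)-k-r)) * ((1+x)^r * ((n-k).descFactorial r : ℝ)) := by
            apply mul_le_mul_of_nonneg_left ihr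
            nlinarith [hx0, hkd2]
        _ = (1+x)^(r+1) * (((n:ℝ)-k-r) * ((n-k).descFactorial r : ℝ)) := by ring
  have hpow : (1+x)^(d-1) ≤ 2 := by
    have hbern := one_add_mul_le_pow (a := -x) (by linarith) (d-1)
    have hds : ((d-1 : ℕ):ℝ) = (d:ℝ) - 1 := by
      rw [Nat.cast_sub (by omega)]; norm_num
    rw [hds] at hbern
    have hhalf : (1/2 : ℝ) ≤ (1-x)^(d-1) := by
      have h1 : ((d:ℝ)-1)*x ≤ 1/2 := by
        rw [hx]
        rw [mul_one_div, div_le_div_iff₀ (by positivity) (by norm_num)]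
        nlinarith [hd0]
      have : 1 + ((d:ℝ)-1) * (-x) = 1 - ((d:ℝ)-1)*x := by ring
      rw [this] at hbern
      have : (1 + -x) = 1 - x := by ring
      rw [this] at hbern
      linarith
    have hprod : (1+x)^(d-1) * (1-x)^(d-1) ≤ 1 := by
      rw [← mul_pow]
      apply pow_le_one₀
      · nlinarith [hx0, hx4]
      · nlinarith [hx0]
    nlinarith [hprod, hhalf, pow_nonneg (by linarith : (0:ℝ) ≤ 1+x) (d-1),
      pow_nonneg (by linarith : (0:ℝ) ≤ 1-x) (d-1)]
  have hfin : (2:ℝ) * (n.descFactorial (d-1) : ℝ) ≤ 5 * ((n-k).descFactorial (d-1) : ℝ) := by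
    have hc := claim (d-1) le_rfl
    have hdFk : (0:ℝ) ≤ ((n-k).descFactorial (d-1) : ℝ) := by positivity
    nlinarith [hc, hpow, hdFk]
  have hfinN : 2 * n.descFactorial (d-1) ≤ 5 * (n-k).descFactorial (d-1) := by
    exact_mod_cast hfin
  rw [Nat.descFactorial_eq_factorial_mul_choose, Nat.descFactorial_eq_factorial_mul_choose] at hfinN
  have : Nat.factorial (d-1) * (2 * n.choose (d-1)) ≤ Nat.factorial (d-1) * (5 * (n-k).choose (d-1)) := by
    calc Nat.factorial (d-1) * (2 * n.choose (d-1))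
        = 2 * (Nat.factorial (d-1) * n.choose (d-1)) := by ring
      _ ≤ 5 * (Nat.factorial (d-1) * (n-k).choose (d-1)) := hfinN
      _ = Nat.factorial (d-1) * (5 * (n-k).choose (d-1)) := by ring
  exact Nat.le_of_mul_le_mul_left this (Nat.factorial_pos _)

/-- **Lemma 3.** With `α = (n-d+1)/d` and `β = ⌈(n-d+1)/(2d+1)⌉`, for `1 ≤ k ≤ n/2`:
if `k < β` then `Σ_{i odd,1≤i≤d} C(k,i)C(n-k,d-i) ≥ (2k/(5α))·C(n,d)`, and if
`β ≤ k ≤ n/2` then `Σ_{i odd,1≤i≤d} C(k,i)C(n-k,d-i) ≥ (1/5)·C(n,d)`. -/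
theorem lemma3 (n d : ℕ) (hd : 2 ≤ d) (hdn : 2 * d ≤ n)
    (k : ℕ) (hk1 : 1 ≤ k) (hk2 : 2 * k ≤ n) :
    (k < Nat.ceil (((n : ℝ) - d + 1) / (2 * d + 1)) →
      (2 * (k : ℝ) / (5 * (((n : ℝ) - d + 1) / d))) * (n.choose d : ℝ)
        ≤ ((∑ i ∈ (Finset.Icc 1 d).filter (fun i => Odd i),
              k.choose i * (n - k).choose (d - i) : ℕ) : ℝ))
    ∧ (Nat.ceil (((n : ℝ) - d + 1) / (2 * d + 1)) ≤ k →
      (1 / 5 : ℝ) * (n.choose d : ℝ)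
        ≤ ((∑ i ∈ (Finset.Icc 1 d).filter (fun i => Odd i),
              k.choose i * (n - k).choose (d - i) : ℕ) : ℝ)) := by
  have hdn' : d ≤ n := by omega
  have hcast : ((n - d + 1 : ℕ):ℝ) = (n:ℝ) - d + 1 := by
    push_cast [Nat.cast_sub hdn']; ring
  have hB : (0:ℝ) < 2*(d:ℝ)+1 := by positivity
  have hA : (0:ℝ) < (n:ℝ) - d + 1 := by
    have h1 : (d:ℝ) ≤ n := by exact_mod_cast hdn'
    linarith
  have hD : (0:ℝ) < (d:ℝ) := by
    have : 0 < d := by omega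
    exact_mod_cast this
  constructor
  · intro hk
    have hr : (k:ℝ) < ((n:ℝ) - d + 1)/(2*d+1) := Nat.lt_ceil.mp hk
    have hb : k*(2*d+1) + d ≤ n := by
      have h1 : (k:ℝ) * (2*(d:ℝ)+1) < (n:ℝ) - d + 1 := (lt_div_iff₀ hB).mp hr
      have h2 : ((k*(2*d+1) : ℕ):ℝ) < ((n - d + 1 : ℕ):ℝ) := by
        rw [hcast]; push_cast; linarith
      have h3 : k*(2*d+1) < n - d + 1 := by exact_mod_cast h2
      omega
    have hF := descF n d k hd hb
    have hmem : 1 ∈ (Finset.Icc 1 d).filter (fun i => Odd i) := by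
      simp only [Finset.mem_filter, Finset.mem_Icc]
      exact ⟨⟨le_refl 1, by omega⟩, odd_one⟩
    have hS1 : k.choose 1 * (n-k).choose (d-1)
        ≤ ∑ i ∈ (Finset.Icc 1 d).filter (fun i => Odd i),
            k.choose i * (n - k).choose (d - i) :=
      Finset.single_le_sum (f := fun i => k.choose i * (n - k).choose (d - i))
        (fun i _ => Nat.zero_le _) hmem
    rw [Nat.choose_one_right] at hS1
    have hid := Nat.choose_succ_right_eq n (d-1)
    rw [show d - 1 + 1 = d from by omega] at hid
    have hidR : (n.choose d : ℝ) * d = (n.choose (d-1) : ℝ) * ((n:ℝ) - d + 1) := by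
      have hc2 : ((n - (d-1) : ℕ):ℝ) = (n:ℝ) - d + 1 := by
        rw [Nat.cast_sub (by omega)]
        push_cast [Nat.cast_sub (show 1 ≤ d from by omega)]
        ring
      exact_mod_cast calc ((n.choose d * d : ℕ):ℝ)
          = ((n.choose (d-1) * (n - (d-1)) : ℕ):ℝ) := by rw [hid]
        _ = (n.choose (d-1) : ℝ) * ((n:ℝ) - d + 1) := by push_cast [hc2]; ring
    have hFR : 2*(n.choose (d-1):ℝ) ≤ 5*((n-k).choose (d-1):ℝ) := by exact_mod_cast hF
    set S : ℝ := ((∑ i ∈ (Finset.Icc 1 d).filter (fun i => Odd i),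
        k.choose i * (n - k).choose (d - i) : ℕ) : ℝ) with hSdef
    have hSR : (k:ℝ) * ((n-k).choose (d-1):ℝ) ≤ S := by
      rw [hSdef]; exact_mod_cast hS1
    have h5 : 2*(k:ℝ)*(n.choose (d-1):ℝ) ≤ 5*S := by
      have hk0 : (0:ℝ) ≤ (k:ℝ) := Nat.cast_nonneg k
      nlinarith [mul_le_mul_of_nonneg_left hFR hk0, hSR]
    have goal2 : 2*(k:ℝ)*(n.choose d : ℝ)*d ≤ S*(5*((n:ℝ)-d+1)) := by
      have e : 2*(k:ℝ)*(n.choose d:ℝ)*d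
          = (2*(k:ℝ)*(n.choose (d-1):ℝ))*((n:ℝ)-d+1) := by
        calc 2*(k:ℝ)*(n.choose d:ℝ)*d = 2*(k:ℝ)*((n.choose d:ℝ)*d) := by ring
          _ = 2*(k:ℝ)*((n.choose (d-1):ℝ)*((n:ℝ)-d+1)) := by rw [hidR]
          _ = (2*(k:ℝ)*(n.choose (d-1):ℝ))*((n:ℝ)-d+1) := by ring
      rw [e]
      have := mul_le_mul_of_nonneg_right h5 hA.le
      linarith [this]
    rw [div_mul_eq_mul_div, div_le_iff₀ (by positivity)]
    rw [show S * (5*(((n:ℝ)-d+1)/(d:ℝ))) = S*(5*((n:ℝ)-d+1))/(d:ℝ) from by ring]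
    rw [le_div_iff₀ hD]
    linarith [goal2]
  · intro hk
    have hr : ((n:ℝ) - d + 1)/(2*d+1) ≤ (k:ℝ) := by
      have := Nat.ceil_le.mp hk
      exact_mod_cast this
    have hb : n + 1 ≤ k*(2*d+1) + d := by
      have h1 : (n:ℝ) - d + 1 ≤ (k:ℝ) * (2*(d:ℝ)+1) := (div_le_iff₀ hB).mp hr
      have h2 : ((n - d + 1 : ℕ):ℝ) ≤ ((k*(2*d+1) : ℕ):ℝ) := by
        rw [hcast]; push_cast; linarith
      have h3 : n - d + 1 ≤ k*(2*d+1) := by exact_mod_cast h2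
      omega
    have h5 := case2 n d k hd hdn hk2 hb
    have h5R : (n.choose d : ℝ) ≤ 5 * ((∑ i ∈ (Finset.Icc 1 d).filter (fun i => Odd i),
        k.choose i * (n - k).choose (d - i) : ℕ) : ℝ) := by exact_mod_cast h5
    linarith
end

section
/- (Lemma 5, part 1) Let n, d be integers with 2 ≤ d ≤ n/2 and set β := ⌈(n − d + 1)/(2d + 1)⌉. Then for every integer k with β ≤ k ≤ n/2: C(k,0)·C(n−k, d) + C(k,d)·C(n−k, 0) ≤ 2·[ C(k,1)·C(n−k, d−1) + C(k, d−1)·C(n−k, 1) ]. -/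
/-- **Lemma 5, part 1.** With `β = ⌈(n-d+1)/(2d+1)⌉`, for every `k` with `β ≤ k ≤ n/2`:
`C(k,0)·C(n-k,d) + C(k,d)·C(n-k,0) ≤ 2·[C(k,1)·C(n-k,d-1) + C(k,d-1)·C(n-k,1)]`. -/
theorem lemma5_part1 (n d : ℕ) (hd : 2 ≤ d) (hdn : 2 * d ≤ n)
    (k : ℕ) (hk1 : Nat.ceil (((n : ℝ) - d + 1) / (2 * d + 1)) ≤ k) (hk2 : 2 * k ≤ n) :
    k.choose 0 * (n - k).choose d + k.choose d * (n - k).choose 0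
      ≤ 2 * (k.choose 1 * (n - k).choose (d - 1) + k.choose (d - 1) * (n - k).choose 1) := by
  have hdpos : (0:ℝ) < 2 * (d:ℝ) + 1 := by positivity
  have h1 : ((n : ℝ) - d + 1) ≤ k * (2 * d + 1) := by
    rw [Nat.ceil_le, div_le_iff₀ hdpos] at hk1
    exact hk1
  have h2 : n + 1 ≤ 2 * d * k + k + d := by
    have : (n:ℝ) + 1 ≤ 2 * d * k + k + d := by push_cast at h1 ⊢; nlinarith
    exact_mod_cast this
  have key1 : d * (n - k).choose d ≤ 2 * d * k * (n - k).choose (d - 1) := by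
    obtain ⟨e, rfl⟩ : ∃ e, d = e + 1 := ⟨d - 1, by omega⟩
    have heq := Nat.choose_succ_right_eq (n - k) e
    have hx : n - k - e ≤ 2 * (e + 1) * k := by
      set P := 2 * (e + 1) * k with hP
      omega
    calc (e + 1) * (n - k).choose (e + 1)
        = (n - k).choose (e + 1) * (e + 1) := by ring
      _ = (n - k).choose e * (n - k - e) := heq
      _ ≤ (n - k).choose e * (2 * (e + 1) * k) := Nat.mul_le_mul_left _ hx
      _ = 2 * (e + 1) * k * (n - k).choose ((e + 1) - 1) := by
          simp only [Nat.add_sub_cancel]; ring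
  have key2 : d * k.choose d ≤ 2 * d * (n - k) * k.choose (d - 1) := by
    obtain ⟨e, rfl⟩ : ∃ e, d = e + 1 := ⟨d - 1, by omega⟩
    have heq := Nat.choose_succ_right_eq k e
    have hx : k - e ≤ 2 * (e + 1) * (n - k) :=
      le_trans (by omega) (Nat.le_mul_of_pos_left (n - k) (by omega))
    calc (e + 1) * k.choose (e + 1)
        = k.choose (e + 1) * (e + 1) := by ring
      _ = k.choose e * (k - e) := heq
      _ ≤ k.choose e * (2 * (e + 1) * (n - k)) := Nat.mul_le_mul_left _ hx
      _ = 2 * (e + 1) * (n - k) * k.choose ((e + 1) - 1) := by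
          simp only [Nat.add_sub_cancel]; ring
  simp only [Nat.choose_zero_right, Nat.choose_one_right, one_mul, mul_one]
  have hd0 : 0 < d := by omega
  apply Nat.le_of_mul_le_mul_left _ hd0
  calc d * ((n - k).choose d + k.choose d)
      = d * (n - k).choose d + d * k.choose d := by ring
    _ ≤ 2 * d * k * (n - k).choose (d - 1) + 2 * d * (n - k) * k.choose (d - 1) :=
        Nat.add_le_add key1 key2
    _ = d * (2 * (k * (n - k).choose (d - 1) + k.choose (d - 1) * (n - k))) := by ring
end

section
/- (Lemma 5, part 2) Let n, d be integers with 2 ≤ d ≤ n/2, set α := (n − d + 1)/d and β := ⌈(n − d + 1)/(2d + 1)⌉. Then for every integer k with 1 ≤ k < β: (i) C(k,0)·C(n−k, d) + C(k,d)·C(n−k, 0) ≤ (α/k)·[ C(k,1)·C(n−k, d−1) + C(k, d−1)·C(n−k, 1) ], and (ii) α/k ≥ 2. -/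
/-- **Lemma 5, part 2.** With `α = (n-d+1)/d` and `β = ⌈(n-d+1)/(2d+1)⌉`, for every
`k` with `1 ≤ k < β`:
(i) `C(k,0)·C(n-k,d) + C(k,d)·C(n-k,0) ≤ (α/k)·[C(k,1)·C(n-k,d-1) + C(k,d-1)·C(n-k,1)]`,
and (ii) `α/k ≥ 2`. -/
theorem lemma5_part2 (n d : ℕ) (hd : 2 ≤ d) (hdn : 2 * d ≤ n)
    (k : ℕ) (hk1 : 1 ≤ k) (hk2 : k < Nat.ceil (((n : ℝ) - d + 1) / (2 * d + 1))) :
    ((k.choose 0 * (n - k).choose d + k.choose d * (n - k).choose 0 : ℕ) : ℝ)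
      ≤ ((((n : ℝ) - d + 1) / d) / k)
        * ((k.choose 1 * (n - k).choose (d - 1) + k.choose (d - 1) * (n - k).choose 1 : ℕ) : ℝ)
    ∧ 2 ≤ (((n : ℝ) - d + 1) / d) / k := by
  have hdn' : d ≤ n := le_trans (by omega) hdn
  have hk2' : (k : ℝ) < ((n : ℝ) - d + 1) / (2 * d + 1) := Nat.lt_ceil.mp hk2
  have hpos : (0 : ℝ) < 2 * d + 1 := by positivity
  have hcast : ((n : ℝ) - d + 1) = ((n - d + 1 : ℕ) : ℝ) := by
    push_cast [hdn']; ring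
  have hkr : (k : ℝ) * (2 * d + 1) < ((n - d + 1 : ℕ) : ℝ) := by
    rw [← hcast]; exact (lt_div_iff₀ hpos).mp hk2'
  have key : k * (2 * d + 1) + d ≤ n := by
    have : k * (2 * d + 1) < n - d + 1 := by exact_mod_cast hkr
    omega
  have hlin : 5 * k + d ≤ n := by nlinarith [key]
  have hd1 : d - 1 + 1 = d := by omega
  have hA := Nat.choose_succ_right_eq (n - k) (d - 1)
  rw [hd1] at hA
  have hB := Nat.choose_succ_right_eq k (d - 1)
  rw [hd1] at hB
  have main : ((n - k).choose d + k.choose d) * (d * k)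
      ≤ (n - d + 1) * (k * (n - k).choose (d - 1) + k.choose (d - 1) * (n - k)) := by
    have e1 : (n - k).choose d * (d * k) ≤ (n - d + 1) * (k * (n - k).choose (d - 1)) := by
      calc (n - k).choose d * (d * k) = (n - k).choose (d - 1) * (n - k - (d - 1)) * k := by
            rw [← mul_assoc, hA]
        _ ≤ (n - k).choose (d - 1) * (n - d + 1) * k :=
            Nat.mul_le_mul_right _ (Nat.mul_le_mul_left _ (by omega))
        _ = (n - d + 1) * (k * (n - k).choose (d - 1)) := by ring
    have e2 : k.choose d * (d * k) ≤ (n - d + 1) * (k.choose (d - 1) * (n - k)) := by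
      calc k.choose d * (d * k) = k.choose (d - 1) * (k - (d - 1)) * k := by
            rw [← mul_assoc, hB]
        _ ≤ k.choose (d - 1) * (n - k) * (n - d + 1) :=
            Nat.mul_le_mul (Nat.mul_le_mul_left _ (by omega)) (by omega)
        _ = (n - d + 1) * (k.choose (d - 1) * (n - k)) := by ring
    calc ((n - k).choose d + k.choose d) * (d * k)
        = (n - k).choose d * (d * k) + k.choose d * (d * k) := by ring
      _ ≤ (n - d + 1) * (k * (n - k).choose (d - 1)) + (n - d + 1) * (k.choose (d - 1) * (n - k)) :=
          Nat.add_le_add e1 e2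
      _ = (n - d + 1) * (k * (n - k).choose (d - 1) + k.choose (d - 1) * (n - k)) := by ring
  have hdk : (0 : ℝ) < (d : ℝ) * k := by positivity
  constructor
  · rw [div_div, div_mul_eq_mul_div, le_div_iff₀ hdk, hcast]
    have goal' : (((n - k).choose d + k.choose d) : ℕ) * ((d : ℝ) * k)
        ≤ ((n - d + 1 : ℕ) : ℝ) * ((k * (n - k).choose (d - 1) + k.choose (d - 1) * (n - k) : ℕ)) := by
      exact_mod_cast main
    simpa [Nat.choose_one_right, mul_comm, mul_assoc, mul_left_comm] using goal'
  · rw [div_div, le_div_iff₀ hdk, hcast]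
    have key2 : 2 * (d * k) + k + d ≤ n := by nlinarith [key]
    have : 2 * (d * k) < n - d + 1 := by omega
    have : (2 : ℝ) * (d * k) < ((n - d + 1 : ℕ) : ℝ) := by exact_mod_cast this
    linarith
end

section
/- (Ratio inequality from the proof of Lemma 4) Let n, d, k, i be integers with 1 ≤ i ≤ d − 1, i + 1 ≤ k, and n − k − d + i ≥ 1. Then C(k, i+1)·C(n−k, d−i−1) + C(k, i−1)·C(n−k, d−i+1) ≥ (1/2)·C(k, i)·C(n−k, d−i). -/
private lemma nat_amgm (x y : ℕ) : 2 * (x * y) ≤ x * x + y * y := by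
  rcases Nat.le_total x y with h | h <;>
    obtain ⟨e, rfl⟩ := Nat.exists_eq_add_of_le h <;> nlinarith [Nat.zero_le (e * e)]

private lemma choose_key (a b c g : ℕ) :
    (a+c+2).choose (a+1) * (b+g+2).choose (b+1)
      ≤ 2 * ((a+c+2).choose (a+2) * (b+g+2).choose b
          + (a+c+2).choose a * (b+g+2).choose (b+2)) := by
  set M1 := (a+c+2).choose (a+1) with hM1
  set M2 := (b+g+2).choose (b+1) with hM2
  set A := (a+c+2).choose (a+2) with hA
  set B := (b+g+2).choose b with hB
  set C := (a+c+2).choose a with hC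
  set D := (b+g+2).choose (b+2) with hD
  have h1 : A * (a+2) = M1 * (c+1) := by
    have := Nat.choose_succ_right_eq (a+c+2) (a+1)
    simpa [hA, hM1, Nat.add_sub_cancel_left, show a+c+2-(a+1) = c+1 by omega] using this
  have h2 : M1 * (a+1) = C * (c+2) := by
    have := Nat.choose_succ_right_eq (a+c+2) a
    simpa [hC, hM1, show a+c+2-a = c+2 by omega] using this
  have h3 : M2 * (b+1) = B * (g+2) := by
    have := Nat.choose_succ_right_eq (b+g+2) b
    simpa [hB, hM2, show b+g+2-b = g+2 by omega] using this
  have h4 : D * (b+2) = M2 * (g+1) := by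
    have := Nat.choose_succ_right_eq (b+g+2) (b+1)
    simpa [hD, hM2, show b+g+2-(b+1) = g+1 by omega] using this
  clear_value M1 M2 A B C D
  have hkey : A * B * C * D * ((a+2)*(b+2)*(c+2)*(g+2))
      = M1 * M1 * (M2 * M2) * ((a+1)*(b+1)*(c+1)*(g+1)) := by
    calc A * B * C * D * ((a+2)*(b+2)*(c+2)*(g+2))
        = (A*(a+2)) * (B*(g+2)) * (C*(c+2)) * (D*(b+2)) := by ring
      _ = (M1*(c+1)) * (M2*(b+1)) * (M1*(a+1)) * (M2*(g+1)) := by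
          rw [h1, ← h3, ← h2, h4]
      _ = M1 * M1 * (M2 * M2) * ((a+1)*(b+1)*(c+1)*(g+1)) := by ring
  have h16 : (a+2)*(b+2)*(c+2)*(g+2) ≤ 16 * ((a+1)*(b+1)*(c+1)*(g+1)) := by
    calc (a+2)*(b+2)*(c+2)*(g+2)
        ≤ (2*(a+1))*(2*(b+1))*(2*(c+1))*(2*(g+1)) := by gcongr <;> omega
      _ = 16 * ((a+1)*(b+1)*(c+1)*(g+1)) := by ring
  have habcd : M1 * M1 * (M2 * M2) ≤ 16 * (A * B * C * D) := by
    have hpos : 0 < (a+2)*(b+2)*(c+2)*(g+2) := by positivity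
    have : M1 * M1 * (M2 * M2) * ((a+2)*(b+2)*(c+2)*(g+2))
        ≤ 16 * (A * B * C * D) * ((a+2)*(b+2)*(c+2)*(g+2)) := by
      calc M1 * M1 * (M2 * M2) * ((a+2)*(b+2)*(c+2)*(g+2))
          ≤ M1 * M1 * (M2 * M2) * (16 * ((a+1)*(b+1)*(c+1)*(g+1))) :=
            Nat.mul_le_mul_left _ h16
        _ = 16 * (A * B * C * D * ((a+2)*(b+2)*(c+2)*(g+2))) := by rw [hkey]; ring
        _ = 16 * (A * B * C * D) * ((a+2)*(b+2)*(c+2)*(g+2)) := by ring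
    exact Nat.le_of_mul_le_mul_right this hpos
  have hsq : (M1 * M2) * (M1 * M2) ≤ (2 * (A*B + C*D)) * (2 * (A*B + C*D)) := by
    calc (M1 * M2) * (M1 * M2) = M1 * M1 * (M2 * M2) := by ring
      _ ≤ 16 * (A * B * C * D) := habcd
      _ ≤ 4 * ((A*B)*(A*B) + (C*D)*(C*D)) + 8 * ((A*B)*(C*D)) := by
          nlinarith [nat_amgm (A*B) (C*D)]
      _ = (2 * (A*B + C*D)) * (2 * (A*B + C*D)) := by ring
  exact Nat.mul_self_le_mul_self_iff.mp hsq

/-- **Ratio inequality** from the proof of Lemma 4. For integers with `1 ≤ i ≤ d-1`,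
`i+1 ≤ k` and `n-k-d+i ≥ 1`:
`C(k,i+1)·C(n-k,d-i-1) + C(k,i-1)·C(n-k,d-i+1) ≥ (1/2)·C(k,i)·C(n-k,d-i)`. -/
theorem ratio_inequality (n d k i : ℕ) (hi1 : 1 ≤ i) (hi2 : i ≤ d - 1)
    (hik : i + 1 ≤ k) (hn : k + d + 1 ≤ n + i) :
    (1 / 2 : ℝ) * ((k.choose i * (n - k).choose (d - i) : ℕ) : ℝ)
      ≤ ((k.choose (i + 1) * (n - k).choose (d - i - 1)
          + k.choose (i - 1) * (n - k).choose (d - i + 1) : ℕ) : ℝ) := by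
  obtain ⟨a, rfl⟩ : ∃ a, i = a + 1 := ⟨i - 1, by omega⟩
  obtain ⟨c, rfl⟩ : ∃ c, k = a + c + 2 := ⟨k - a - 2, by omega⟩
  obtain ⟨b, rfl⟩ : ∃ b, d = a + b + 2 := ⟨d - a - 2, by omega⟩
  obtain ⟨g, rfl⟩ : ∃ g, n = a + b + c + g + 4 := ⟨n - (a+b+c+4), by omega⟩
  have e1 : a + b + c + g + 4 - (a + c + 2) = b + g + 2 := by omega
  have e2 : a + b + 2 - (a + 1) = b + 1 := by omega
  have e3 : a + b + 2 - (a + 1) - 1 = b := by omega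
  have e4 : a + b + 2 - (a + 1) + 1 = b + 2 := by omega
  have e5 : a + 1 - 1 = a := by omega
  rw [e1, e2]
  simp only [Nat.add_sub_cancel]
  have h := choose_key a b c g
  have h' : ((a+c+2).choose (a+1) * (b+g+2).choose (b+1) : ℝ)
      ≤ 2 * ((a+c+2).choose (a+2) * (b+g+2).choose b
          + (a+c+2).choose a * (b+g+2).choose (b+2)) := by exact_mod_cast h
  push_cast
  linarith
end
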